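/- arXiv:0909.1259 — 3 statements merged into one kernel-verified Lean document; each statement's English description precedes it below -/
import Mathlib

section
/- Let $\mathfrak{M}$ be a linearly ordered abelian group (written multiplicatively) and let $\mathfrak{B} \subseteq \mathfrak{M}$ be a set all of whose elements are small, i.e., $\mathfrak{b} < 1$ for every $\mathfrak{b} \in \mathfrak{B}$. If $\mathfrak{B}$ is well ordered for the reverse of the group order (equivalently, the relation $>$ is well-founded on $\mathfrak{B}$, i.e., every nonempty subset of $\mathfrak{B}$ has a greatest element, i.e., there is no infinite strictly increasing sequence in $\mathfrak{B}$), then the submonoid $\mathfrak{B}^*$ of $\mathfrak{M}$ generated by $\mathfrak{B}$ is also well ordered for the reverse of the group order. -/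
/-- Higman/Nash-Williams: if `B` is a set of small elements (all `< 1`) of a
linearly ordered abelian group, well ordered for the reverse of the order
(i.e. `>` is well-founded on `B`), then the submonoid generated by `B` is
also well ordered for the reverse of the order. -/
theorem submonoid_closure_wellFoundedOn_gt
    {M : Type*} [CommGroup M] [LinearOrder M] [IsOrderedMonoid M] (B : Set M)
    (hsmall : ∀ b ∈ B, b < 1)
    (hwo : B.WellFoundedOn (· > ·)) :
    (Submonoid.closure B : Set M).WellFoundedOn (· > ·) := by
  -- In `Mᵒᵈ` the claim is `IsWF` of a submonoid generated by a partially well-ordered set of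
  -- elements `≥ 1`, which is Higman's lemma `Set.IsPWO.submonoid_closure`.
  have hpwo : Set.IsPWO (α := Mᵒᵈ) B := Set.IsWF.isPWO (α := Mᵒᵈ) hwo
  have hone_le : ∀ b ∈ B, (1 : Mᵒᵈ) ≤ b := fun b hb => (hsmall b hb).le
  exact (hpwo.submonoid_closure hone_le).isWF
end

section
/- Let $\Gamma$ be a linearly ordered (additive) abelian group, let $\lambda$ be a limit ordinal, and let $(T_\alpha)_{\alpha < \lambda}$ be a family of Hahn series in $\mathbb{R}[[\Gamma]]$ with $T_\alpha \neq T_\beta$ whenever $\alpha < \beta < \lambda$, which is pseudo Cauchy: for all ordinals $\alpha < \beta < \gamma < \lambda$ one has $v(T_\beta - T_\gamma) > v(T_\alpha - T_\beta)$ (i.e., $T_\alpha - T_\beta \succ T_\beta - T_\gamma$). Then there exists a pseudo limit $T \in \mathbb{R}[[\Gamma]]$, that is, a Hahn series $T$ such that for every $\alpha < \lambda$ one has $T \neq T_{\alpha+1}$ and $v(T - T_{\alpha+1}) > v(T_\alpha - T_{\alpha+1})$ (equivalently, $T_\alpha - T \sim T_\alpha - T_{\alpha+1}$ for all $\alpha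 < \lambda$). -/
/-!
Put `γ α = v(T α - T (α + 1))`. The pseudo Cauchy condition forces `v(T α - T β) = γ α` for all
`α < β < l`, so for `g ≤ γ α` the coefficient of `T β` at `g` is the same for every `β > α`. The
pseudo limit `L` takes these eventual coefficients. Below `γ α` it agrees with `T (α + 1)`, so its
support is well founded, and `T α - L` agrees with `T α - T (α + 1)` up to `γ α`, so
`v(T α - L) = γ α`. Applied at `α + 1`: `v(L - T (α + 1)) = γ (α + 1) > γ α`.
-/

open Set

theorem Set.IsPWO.of_forall_inter_Iic {α : Type*} [LinearOrder α] {s : Set α}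
    (h : ∀ x ∈ s, (s ∩ Iic x).IsPWO) : s.IsPWO := by
  rw [isPWO_iff_isWF, isWF_iff_no_descending_seq]
  intro u hu hmem
  have hsub : ∀ n, u n ∈ s ∩ Iic (u 0) := fun n => ⟨hmem n, hu.antitone n.zero_le⟩
  exact isWF_iff_no_descending_seq.1 (h _ (hmem 0)).isWF u hu hsub

namespace HahnSeries

variable {Γ R : Type*} [LinearOrder Γ] [Zero Γ] [AddGroup R]

theorem order_eq_of_coeff_eq {x y : HahnSeries Γ R} (hy : y ≠ 0)
    (h : ∀ g ≤ y.order, x.coeff g = y.coeff g) : x.order = y.order := by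
  have hx : x.coeff y.order ≠ 0 := h _ le_rfl ▸ mt coeff_order_eq_zero.1 hy
  refine (order_le_of_coeff_ne_zero hx).antisymm
    ((le_order_iff_forall (ne_zero_of_coeff_ne_zero hx)).2 fun g hg => ?_)
  rw [h g hg.le, coeff_eq_zero_of_lt_order hg]

structure IsPseudoCauchy (l : Ordinal) (T : Ordinal → HahnSeries Γ R) : Prop where
  ne : ∀ α β, α < β → β < l → T α ≠ T β
  order_lt : ∀ α β γ, α < β → β < γ → γ < l → (T α - T β).order < (T β - T γ).order

noncomputable def stepOrder (T : Ordinal → HahnSeries Γ R) (α : Ordinal) : Γ :=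
  (T α - T (α + 1)).order

open Classical in
noncomputable def limitCoeff (l : Ordinal) (T : Ordinal → HahnSeries Γ R) (g : Γ) : R :=
  if h : ∃ α < l, g ≤ stepOrder T α then (T (h.choose + 1)).coeff g else 0

namespace IsPseudoCauchy

variable {l : Ordinal} {T : Ordinal → HahnSeries Γ R}

theorem order_sub (hT : IsPseudoCauchy l T) {α β : Ordinal} (hαβ : α < β) (hβ : β < l) :
    (T α - T β).order = stepOrder T α := by
  have hsucc : α + 1 ≤ β := Order.add_one_le_iff.2 hαβ
  rcases hsucc.eq_or_lt with rfl | hsucc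
  · rfl
  have hgap := hT.order_lt _ _ _ (lt_add_one α) hsucc hβ
  refine order_eq_of_coeff_eq (sub_ne_zero.2 (hT.ne _ _ (lt_add_one α) (hsucc.trans hβ)))
    fun g hg => ?_
  have := coeff_eq_zero_of_lt_order (hg.trans_lt hgap)
  rw [coeff_sub, sub_eq_zero] at this
  rw [coeff_sub, coeff_sub, this]

theorem coeff_eq_of_lt (hT : IsPseudoCauchy l T) {δ β β' : Ordinal} {g : Γ}
    (hβ : δ < β) (hββ' : β < β') (hβ' : β' < l) (hg : g ≤ stepOrder T δ) :
    (T β).coeff g = (T β').coeff g := by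
  have hgap := hT.order_lt _ _ _ hβ hββ' hβ'
  rw [hT.order_sub hβ (hββ'.trans hβ')] at hgap
  rw [← sub_eq_zero, ← coeff_sub]
  exact coeff_eq_zero_of_lt_order (hg.trans_lt hgap)

theorem coeff_eq_coeff (hT : IsPseudoCauchy l T) {δ β β' : Ordinal} {g : Γ}
    (hβ : δ < β) (hβ' : δ < β') (hβl : β < l) (hβ'l : β' < l) (hg : g ≤ stepOrder T δ) :
    (T β).coeff g = (T β').coeff g := by
  rcases lt_trichotomy β β' with h | rfl | h
  · exact hT.coeff_eq_of_lt hβ h hβ'l hg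
  · rfl
  · exact (hT.coeff_eq_of_lt hβ' h hβl hg).symm

theorem limitCoeff_eq (hT : IsPseudoCauchy l T) (hl : Order.IsSuccLimit l) {α β : Ordinal}
    {g : Γ} (hαβ : α < β) (hβ : β < l) (hg : g ≤ stepOrder T α) :
    limitCoeff l T g = (T β).coeff g := by
  have h : ∃ α < l, g ≤ stepOrder T α := ⟨α, hαβ.trans hβ, hg⟩
  obtain ⟨hα', hg'⟩ := h.choose_spec
  rw [limitCoeff, dif_pos h]
  rcases le_total α h.choose with hle | hle
  · exact hT.coeff_eq_coeff (hle.trans_lt (lt_add_one _)) hαβ (hl.add_one_lt hα') hβ hg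
  · exact hT.coeff_eq_coeff (lt_add_one _) (hle.trans_lt hαβ) (hl.add_one_lt hα') hβ hg'

theorem isPWO_support_limitCoeff (hT : IsPseudoCauchy l T) (hl : Order.IsSuccLimit l) :
    (Function.support (limitCoeff l T)).IsPWO := by
  refine IsPWO.of_forall_inter_Iic fun x hx => ?_
  have h : ∃ α < l, x ≤ stepOrder T α := by
    by_contra h
    exact hx (dif_neg h)
  obtain ⟨α, hα, hxα⟩ := h
  refine (T (α + 1)).isPWO_support.mono fun g ⟨hg, hgx⟩ => ?_
  rwa [Function.mem_support, hT.limitCoeff_eq hl (lt_add_one α) (hl.add_one_lt hα)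
    (le_trans hgx hxα)] at hg

noncomputable def limit (hT : IsPseudoCauchy l T) (hl : Order.IsSuccLimit l) :
    HahnSeries Γ R :=
  ⟨limitCoeff l T, hT.isPWO_support_limitCoeff hl⟩

theorem coeff_sub_limit (hT : IsPseudoCauchy l T) (hl : Order.IsSuccLimit l) {α : Ordinal}
    {g : Γ} (hα : α + 1 < l) (hg : g ≤ stepOrder T α) :
    (T α - hT.limit hl).coeff g = (T α - T (α + 1)).coeff g := by
  rw [coeff_sub, coeff_sub]
  exact congrArg _ (hT.limitCoeff_eq hl (lt_add_one α) hα hg)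

theorem ne_limit (hT : IsPseudoCauchy l T) (hl : Order.IsSuccLimit l) {α : Ordinal}
    (hα : α + 1 < l) : T α ≠ hT.limit hl := by
  have hne : T α - T (α + 1) ≠ 0 := sub_ne_zero.2 (hT.ne _ _ (lt_add_one α) hα)
  have hcoeff := hT.coeff_sub_limit hl hα le_rfl
  exact sub_ne_zero.1 (ne_zero_of_coeff_ne_zero (hcoeff ▸ mt coeff_order_eq_zero.1 hne))

theorem order_sub_limit (hT : IsPseudoCauchy l T) (hl : Order.IsSuccLimit l) {α : Ordinal}
    (hα : α + 1 < l) : (T α - hT.limit hl).order = stepOrder T α :=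
  order_eq_of_coeff_eq (sub_ne_zero.2 (hT.ne _ _ (lt_add_one α) hα))
    fun _ hg => hT.coeff_sub_limit hl hα hg

end IsPseudoCauchy

end HahnSeries

theorem hahnSeries_pseudo_complete_general
    {Γ : Type*} [AddCommGroup Γ] [LinearOrder Γ]
    (l : Ordinal) (hl : Order.IsSuccLimit l)
    (T : Ordinal → HahnSeries Γ ℝ)
    (hne : ∀ α β : Ordinal, α < β → β < l → T α ≠ T β)
    (hpc : ∀ α β γ : Ordinal, α < β → β < γ → γ < l →
      (T β - T γ).order > (T α - T β).order) :
    ∃ L : HahnSeries Γ ℝ, ∀ α : Ordinal, α < l →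
      L ≠ T (α + 1) ∧ (L - T (α + 1)).order > (T α - T (α + 1)).order := by
  have hT : HahnSeries.IsPseudoCauchy l T := ⟨hne, hpc⟩
  refine ⟨hT.limit hl, fun α hα => ?_⟩
  have hα2 : α + 1 + 1 < l := hl.add_one_lt (hl.add_one_lt hα)
  refine ⟨(hT.ne_limit hl hα2).symm, ?_⟩
  rw [← neg_sub, HahnSeries.order_neg, hT.order_sub_limit hl hα2]
  exact hT.order_lt _ _ _ (lt_add_one α) (lt_add_one _) hα2

/-- Hahn series fields `ℝ[[Γ]]` are pseudo complete: every pseudo Cauchy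
sequence (indexed by the ordinals below a limit ordinal `l`, with distinct
terms) has a pseudo limit. Here `v(A) = A.order` is the valuation (least
element of the support) of a nonzero Hahn series. -/
theorem hahnSeries_pseudo_complete
    {Γ : Type*} [AddCommGroup Γ] [LinearOrder Γ] [IsOrderedAddMonoid Γ]
    (l : Ordinal) (hl : Order.IsSuccLimit l)
    (T : Ordinal → HahnSeries Γ ℝ)
    (hne : ∀ α β : Ordinal, α < β → β < l → T α ≠ T β)
    (hpc : ∀ α β γ : Ordinal, α < β → β < γ → γ < l →
      (T β - T γ).order > (T α - T β).order) :
    ∃ L : HahnSeries Γ ℝ, ∀ α : Ordinal, α < l →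
      L ≠ T (α + 1) ∧ (L - T (α + 1)).order > (T α - T (α + 1)).order :=
  hahnSeries_pseudo_complete_general l hl T hne hpc
end

section
/- Let $\Gamma$ be a linearly ordered (additive) abelian group and let $\Phi : \mathbb{R}[[\Gamma]] \to \mathbb{R}[[\Gamma]]$ be a map such that for all $T_1, T_2 \in \mathbb{R}[[\Gamma]]$ with $T_1 \neq T_2$ one has $\Phi(T_1) - \Phi(T_2) \prec T_1 - T_2$, i.e., either $\Phi(T_1) = \Phi(T_2)$ or $v(\Phi(T_1) - \Phi(T_2)) > v(T_1 - T_2)$. Then there exists a unique $S \in \mathbb{R}[[\Gamma]]$ such that $\Phi(S) = S$. -/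
/-!
Write `γ x = v(x - Φ x)` for how far `x` is from being fixed, and order the series by
`x ≼ y ↔ γ x ≤ v(y - x)`, i.e. by inclusion of the balls `B(x, γ x)`. Contractivity and the
ultrametric inequality make `≼` transitive. Since `ℝ[[Γ]]` is spherically complete (a nested
family of balls has a common point, obtained by gluing coefficients), every chain is bounded, so
Zorn's lemma gives a maximal `m`. If `m` were not fixed, `Φ m` would lie strictly above it,
because `γ (Φ m) > γ m`.
-/

namespace HahnSeries

variable {Γ R : Type*} [LinearOrder Γ] [AddGroup R]

theorem orderTop_sub_comm (x y : R⟦Γ⟧) : (x - y).orderTop = (y - x).orderTop := by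
  rw [← neg_sub, orderTop_neg]

theorem orderTop_lt_orderTop_of_order_lt [Zero Γ] {x y : R⟦Γ⟧} (hx : x ≠ 0)
    (h : x.order < y.order) : x.orderTop < y.orderTop := by
  by_cases hy : y = 0
  · simpa [hy] using hx
  rw [← order_eq_orderTop_of_ne_zero hx, ← order_eq_orderTop_of_ne_zero hy]
  exact_mod_cast h

theorem coeff_eq_of_lt_orderTop_sub {x y : R⟦Γ⟧} {g : Γ} (h : g < (x - y).orderTop) :
    x.coeff g = y.coeff g :=
  sub_eq_zero.mp (coeff_eq_zero_of_lt_orderTop h)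

/-- Spherical completeness: balls `B(x i, r i)` that are nested according to their radii have a
common point. -/
theorem exists_forall_le_orderTop_sub {ι : Type*} (x : ι → R⟦Γ⟧) (r : ι → WithTop Γ)
    (hx : ∀ i j, r i ≤ r j → r i ≤ (x j - x i).orderTop) :
    ∃ s : R⟦Γ⟧, ∀ i, r i ≤ (s - x i).orderTop := by
  classical
  have coeff_eq : ∀ i j (g : Γ), g < r i → g < r j → (x i).coeff g = (x j).coeff g := by
    intro i j g hi hj
    rcases le_total (r i) (r j) with h | h
    · exact (coeff_eq_of_lt_orderTop_sub (hi.trans_le (hx i j h))).symm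
    · exact coeff_eq_of_lt_orderTop_sub (hj.trans_le (hx j i h))
  let f : Γ → R := fun g => if h : ∃ i, (g : WithTop Γ) < r i then (x h.choose).coeff g else 0
  have hf : ∀ i (g : Γ), g < r i → f g = (x i).coeff g := fun i g hg => by
    have h : ∃ i, (g : WithTop Γ) < r i := ⟨i, hg⟩
    simp only [f, dif_pos h]
    exact coeff_eq _ _ _ h.choose_spec hg
  have hwf : (Function.support f).IsWF := by
    rw [Set.isWF_iff_no_descending_seq]
    intro a ha hsupp
    obtain ⟨i, hi⟩ : ∃ i, (a 0 : WithTop Γ) < r i := by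
      by_contra h
      exact hsupp 0 (dif_neg h)
    refine Set.isWF_iff_no_descending_seq.mp (x i).isWF_support a ha fun n => ?_
    have hn : (a n : WithTop Γ) < r i :=
      (WithTop.coe_le_coe.mpr (ha.antitone (Nat.zero_le n))).trans_lt hi
    simpa [hf i _ hn] using hsupp n
  refine ⟨⟨f, hwf.isPWO⟩, fun i => le_orderTop_iff_forall.mpr fun g hg => ?_⟩
  rw [coeff_sub, sub_eq_zero]
  exact hf i g hg

/-- `Φ x - Φ y ≺ x - y` whenever `x ≠ y`. -/
def IsContractive (Φ : R⟦Γ⟧ → R⟦Γ⟧) : Prop :=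
  ∀ x y, x ≠ y → (x - y).orderTop < (Φ x - Φ y).orderTop

namespace IsContractive

variable {Φ : R⟦Γ⟧ → R⟦Γ⟧}

theorem orderTop_sub_le (hΦ : IsContractive Φ) (x y : R⟦Γ⟧) :
    (x - y).orderTop ≤ (Φ x - Φ y).orderTop := by
  rcases eq_or_ne x y with rfl | hxy
  · simp
  · exact (hΦ x y hxy).le

theorem orderTop_sub_map_le_of_le (hΦ : IsContractive Φ) {x y : R⟦Γ⟧}
    (h : (x - Φ x).orderTop ≤ (y - x).orderTop) :
    (x - Φ x).orderTop ≤ (y - Φ y).orderTop :=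
  calc (x - Φ x).orderTop
      ≤ min (y - x).orderTop (min (x - Φ x).orderTop (Φ x - Φ y).orderTop) :=
        le_min h <| le_min le_rfl <|
          h.trans ((orderTop_sub_comm y x).trans_le (hΦ.orderTop_sub_le x y))
    _ ≤ (y - x + (x - Φ x + (Φ x - Φ y))).orderTop :=
        (min_le_min_left _ min_orderTop_le_orderTop_add).trans min_orderTop_le_orderTop_add
    _ = (y - Φ y).orderTop := by rw [sub_add_sub_cancel, sub_add_sub_cancel]

theorem exists_fixedPoint (hΦ : IsContractive Φ) : ∃ x, Φ x = x := by
  let ballLE (x y : R⟦Γ⟧) : Prop := (x - Φ x).orderTop ≤ (y - x).orderTop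
  have trans : ∀ {a b c}, ballLE a b → ballLE b c → ballLE a c := fun {a b c} hab hbc =>
    calc (a - Φ a).orderTop ≤ min (c - b).orderTop (b - a).orderTop :=
          le_min ((hΦ.orderTop_sub_map_le_of_le hab).trans hbc) hab
      _ ≤ (c - b + (b - a)).orderTop := min_orderTop_le_orderTop_add
      _ = (c - a).orderTop := by rw [sub_add_sub_cancel]
  have chain_bdd : ∀ c, IsChain ballLE c → ∃ ub, ∀ a ∈ c, ballLE a ub := by
    intro c hc
    obtain ⟨s, hs⟩ := exists_forall_le_orderTop_sub (fun a : c => (a : R⟦Γ⟧))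
      (fun a => (a - Φ a).orderTop) fun a b hab => by
        rcases eq_or_ne a b with rfl | hne
        · simp
        rcases hc a.2 b.2 (Subtype.coe_ne_coe.mpr hne) with h | h
        · exact h
        · exact hab.trans (h.trans (orderTop_sub_comm _ _).le)
    exact ⟨s, fun a ha => hs ⟨a, ha⟩⟩
  obtain ⟨m, hm⟩ := exists_maximal_of_chains_bounded chain_bdd trans
  refine ⟨m, by_contra fun hne => ?_⟩
  have hmove : ballLE m (Φ m) := (orderTop_sub_comm _ _).le
  exact (hΦ m (Φ m) (Ne.symm hne)).not_ge (hm _ hmove)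

theorem fixedPoint_unique (hΦ : IsContractive Φ) {x y : R⟦Γ⟧} (hx : Φ x = x)
    (hy : Φ y = y) : x = y := by
  by_contra hxy
  simpa [hx, hy] using hΦ x y hxy

end IsContractive

end HahnSeries

open HahnSeries in
theorem hahnSeries_contraction_fixed_point_general
    {Γ : Type*} [AddCommGroup Γ] [LinearOrder Γ]
    (Φ : HahnSeries Γ ℝ → HahnSeries Γ ℝ)
    (hΦ : ∀ T₁ T₂ : HahnSeries Γ ℝ, T₁ ≠ T₂ →
      Φ T₁ = Φ T₂ ∨ (Φ T₁ - Φ T₂).order > (T₁ - T₂).order) :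
    ∃! S : HahnSeries Γ ℝ, Φ S = S := by
  have hΦ' : IsContractive Φ := fun T₁ T₂ hT => by
    rcases hΦ T₁ T₂ hT with h | h
    · simpa [h] using sub_ne_zero.mpr hT
    · exact orderTop_lt_orderTop_of_order_lt (sub_ne_zero.mpr hT) h
  obtain ⟨S, hS⟩ := hΦ'.exists_fixedPoint
  exact ⟨S, hS, fun T hT => hΦ'.fixedPoint_unique hT hS⟩

/-- Fixed point theorem for contractive maps on a Hahn series field:
if `Φ : ℝ[[Γ]] → ℝ[[Γ]]` satisfies `Φ T₁ - Φ T₂ ≺ T₁ - T₂` whenever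
`T₁ ≠ T₂` (i.e. either `Φ T₁ = Φ T₂` or the valuation of `Φ T₁ - Φ T₂`
is strictly greater than that of `T₁ - T₂`), then `Φ` has a unique
fixed point. -/
theorem hahnSeries_contraction_fixed_point
    {Γ : Type*} [AddCommGroup Γ] [LinearOrder Γ] [IsOrderedAddMonoid Γ]
    (Φ : HahnSeries Γ ℝ → HahnSeries Γ ℝ)
    (hΦ : ∀ T₁ T₂ : HahnSeries Γ ℝ, T₁ ≠ T₂ →
      Φ T₁ = Φ T₂ ∨ (Φ T₁ - Φ T₂).order > (T₁ - T₂).order) :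
    ∃! S : HahnSeries Γ ℝ, Φ S = S :=
  hahnSeries_contraction_fixed_point_general Φ hΦ
end
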